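/- Let M be an m×n matrix over a commutative ring, k ≥ 1, with row indices r₁,…,r_{k+1} and column indices c₁,…,c_k. Define a k×k matrix B by B_{i,j} = M(r_i r_{i+1} … r_{k+1} | c_j r_{i+1} … r_{k+1}) (the minor using rows r_i,…,r_{k+1} and columns c_j, r_{i+1},…,r_{k+1}). Then det B = M(r₁ … r_k r_{k+1} | c₁ … c_k r_{k+1}) · ∏_{i=2}^{k} M(r_i … r_{k+1} | r_i … r_{k+1}). -/
import Mathlib

namespace Stmt7

open Matrix

variable {S : Type*} [CommRing S] {k : ℕ}

/-- cast a determinant along an equality of sizes -/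
lemma det_cast {a b : ℕ} (h : a = b) (M : Matrix (Fin a) (Fin a) S) :
    M.det = (M.submatrix (Fin.cast h.symm) (Fin.cast h.symm)).det := by
  subst h; rfl

lemma val_succAbove {n : ℕ} (l : Fin (n + 1)) (a : Fin n) :
    (l.succAbove a).1 = if a.1 < l.1 then a.1 else a.1 + 1 := by
  rcases lt_or_ge (a.castSucc) l with h | h
  · rw [Fin.succAbove_of_castSucc_lt _ _ h, if_pos (by simpa [Fin.lt_def] using h)]
    simp
  · rw [Fin.succAbove_of_le_castSucc _ _ h, if_neg (by simp [Fin.le_def] at h; omega)]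
    rfl

def Emat (A : Matrix (Fin (k + 1)) (Fin (k + 1)) S) (i s : Fin (k + 1)) :
    Matrix (Fin (k - i.1)) (Fin (k - i.1)) S :=
  Matrix.of fun l m =>
    A ⟨if i.1 + l.1 < s.1 then i.1 + l.1 else i.1 + l.1 + 1, by have := l.2; split <;> omega⟩
      ⟨i.1 + 1 + m.1, by have := m.2; omega⟩

def Fmat (A : Matrix (Fin (k + 1)) (Fin (k + 1)) S) (i : Fin (k + 1)) (v : Fin (k + 1) → S) :
    Matrix (Fin (k - i.1 + 1)) (Fin (k - i.1 + 1)) S :=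
  Matrix.of fun l m =>
    if m.1 = 0 then v ⟨i.1 + l.1, by have := i.2; have := l.2; omega⟩
    else A ⟨i.1 + l.1, by have := i.2; have := l.2; omega⟩
      ⟨i.1 + m.1, by have := i.2; have := m.2; omega⟩

def Dm (A : Matrix (Fin (k + 1)) (Fin (k + 1)) S) (i : Fin (k + 1)) :
    Matrix (Fin (k - i.1 + 1)) (Fin (k - i.1 + 1)) S :=
  Matrix.of fun l m =>
    A ⟨i.1 + l.1, by have := i.2; have := l.2; omega⟩
      ⟨i.1 + m.1, by have := i.2; have := m.2; omega⟩

def Lm (A : Matrix (Fin (k + 1)) (Fin (k + 1)) S) : Matrix (Fin (k + 1)) (Fin (k + 1)) S :=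
  Matrix.of fun i s =>
    if i.1 = k then (if s.1 = k then 1 else 0)
    else if s.1 < i.1 then 0 else (-1 : S) ^ (s.1 - i.1) * (Emat A i s).det

def CW (A : Matrix (Fin (k + 1)) (Fin (k + 1)) S) (C : Matrix (Fin (k + 1)) (Fin k) S) :
    Matrix (Fin (k + 1)) (Fin (k + 1)) S :=
  Matrix.of fun s l => if h : l.1 < k then C s ⟨l.1, h⟩ else A s (Fin.last k)

def Bt (A : Matrix (Fin (k + 1)) (Fin (k + 1)) S) (C : Matrix (Fin (k + 1)) (Fin k) S) :
    Matrix (Fin k) (Fin k) S :=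
  Matrix.of fun i j => (Fmat A (Fin.castSucc i) fun s => C s j).det

def Pr (A : Matrix (Fin (k + 1)) (Fin (k + 1)) S) : S :=
  ∏ i : Fin k, if i.1 = 0 then 1 else (Dm A (Fin.castSucc i)).det

lemma sum_L (A : Matrix (Fin (k + 1)) (Fin (k + 1)) S) (i : Fin (k + 1)) (hik : i.1 ≠ k)
    (v : Fin (k + 1) → S) :
    ∑ s, Lm A i s * v s = (Fmat A i v).det := by
  have hi : i.1 < k := lt_of_le_of_ne (Nat.lt_succ_iff.mp i.2) hik
  rw [Matrix.det_succ_column_zero]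
  rw [← Finset.sum_filter_add_sum_filter_not Finset.univ (fun s : Fin (k + 1) => i.1 ≤ s.1)]
  have h2 : ∑ s ∈ Finset.filter (fun s : Fin (k + 1) => ¬i.1 ≤ s.1) Finset.univ,
      Lm A i s * v s = 0 := by
    apply Finset.sum_eq_zero
    intro s hs
    simp only [Finset.mem_filter, Finset.mem_univ, true_and] at hs
    simp only [Lm, Matrix.of_apply, if_neg hik, if_pos (show s.1 < i.1 by omega)]
    ring
  rw [h2, add_zero]
  refine Finset.sum_bij' (i := fun (s : Fin (k + 1)) hs => (⟨s.1 - i.1, ?_⟩ : Fin (k - i.1 + 1)))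
    (j := fun (l : Fin (k - i.1 + 1)) hl => (⟨i.1 + l.1, ?_⟩ : Fin (k + 1)))
    ?_ ?_ ?_ ?_ ?_
  · simp only [Finset.mem_filter, Finset.mem_univ, true_and] at hs
    have := s.2; omega
  · have := hl; have := l.2; omega
  · intro a ha; exact Finset.mem_univ _
  · intro l hl
    simp only [Finset.mem_filter, Finset.mem_univ, true_and]
    omega
  · intro s hs
    simp only [Finset.mem_filter, Finset.mem_univ, true_and] at hs
    exact Fin.ext (by beta_reduce; simp only [Fin.val_mk]; omega)
  · intro l hl
    exact Fin.ext (by beta_reduce; simp only [Fin.val_mk]; omega)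
  · intro s hs
    simp only [Finset.mem_filter, Finset.mem_univ, true_and] at hs
    simp only [Lm, Matrix.of_apply, if_neg hik, if_neg (show ¬s.1 < i.1 by omega)]
    have hF0 : Fmat A i v ⟨s.1 - i.1, by have := s.2; omega⟩ 0 = v s := by
      simp only [Fmat, Matrix.of_apply, Fin.val_zero, reduceIte]
      congr 1
      exact Fin.ext (by simp only [Fin.val_mk]; omega)
    have hFsub : ((Fmat A i v).submatrix
        (Fin.succAbove ⟨s.1 - i.1, by have := s.2; omega⟩) Fin.succ).det
        = (Emat A i s).det := by
      congr 1
      ext a b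
      simp only [Matrix.submatrix_apply, Fmat, Emat, Matrix.of_apply, Fin.val_succ,
        if_neg (Nat.succ_ne_zero b.1)]
      congr 1
      · exact Fin.ext (by
          simp only [Fin.val_mk, val_succAbove]
          split_ifs <;> omega)
      · exact Fin.ext (by simp [Nat.add_comm, Nat.add_assoc, Nat.add_left_comm])
    rw [hF0, hFsub]
    ring

lemma det_Fmat_eq_zero (A : Matrix (Fin (k + 1)) (Fin (k + 1)) S) (i : Fin (k + 1))
    (q : Fin (k + 1)) (hq : i.1 < q.1) :
    (Fmat A i fun s => A s q).det = 0 := by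
  have hq1 : q.1 - i.1 < k - i.1 + 1 := by have := q.2; omega
  apply Matrix.det_zero_of_column_eq (i := (0 : Fin (k - i.1 + 1))) (j := ⟨q.1 - i.1, hq1⟩)
  · exact Fin.ne_of_val_ne (by simp; omega)
  · intro l
    simp only [Fmat, Matrix.of_apply]
    rw [if_pos (show ((0 : Fin (k - i.1 + 1)) : ℕ) = 0 by simp), if_neg (by omega)]
    congr 1
    exact Fin.ext (by simp; omega)

lemma D_last (A : Matrix (Fin (k + 1)) (Fin (k + 1)) S) :
    (Dm A (Fin.last k)).det = A (Fin.last k) (Fin.last k) := by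
  rw [det_cast (show k - (Fin.last k).1 + 1 = 1 from by simp) (Dm A (Fin.last k)),
    Matrix.det_fin_one]
  simp only [Matrix.submatrix_apply, Dm, Matrix.of_apply]
  congr 1 <;> exact Fin.ext (by simp)

lemma detL_mul_detA (A : Matrix (Fin (k + 1)) (Fin (k + 1)) S) :
    (Lm A).det * A.det = ∏ i, (Dm A i).det := by
  rw [← Matrix.det_mul]
  have tri : (Lm A * A).BlockTriangular OrderDual.toDual := by
    intro p q h
    have hpq : p.1 < q.1 := h
    have hpk : p.1 ≠ k := by have := q.2; omega
    rw [Matrix.mul_apply, sum_L A p hpk (fun s => A s q)]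
    exact det_Fmat_eq_zero A p q hpq
  rw [Matrix.det_of_lowerTriangular _ tri]
  apply Finset.prod_congr rfl
  intro p _
  by_cases hpk : p.1 = k
  · have hp : p = Fin.last k := Fin.ext (by simpa using hpk)
    subst hp
    rw [D_last, Matrix.mul_apply]
    have hsum : ∀ s : Fin (k + 1), Lm A (Fin.last k) s * A s (Fin.last k)
        = if s = Fin.last k then A s (Fin.last k) else 0 := by
      intro s
      simp only [Lm, Matrix.of_apply, Fin.val_last, reduceIte]
      by_cases hsk : s = Fin.last k
      · rw [if_pos (by simp [hsk]), if_pos hsk, one_mul]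
      · rw [if_neg (by simpa [Fin.ext_iff] using hsk), if_neg hsk, zero_mul]
    simp only [hsum]
    rw [Finset.sum_ite_eq' Finset.univ (Fin.last k) (fun s => A s (Fin.last k))]
    simp
  · rw [Matrix.mul_apply, sum_L A p hpk (fun s => A s p)]
    congr 1
    ext l m
    simp only [Fmat, Dm, Matrix.of_apply]
    split_ifs with h
    · congr 1
      exact Fin.ext (by simp only [Fin.val_mk]; omega)
    · rfl

lemma LCW (hk : 1 ≤ k) (A : Matrix (Fin (k + 1)) (Fin (k + 1)) S)
    (C : Matrix (Fin (k + 1)) (Fin k) S) :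
    (Lm A * CW A C).det = A (Fin.last k) (Fin.last k) * (Bt A C).det := by
  have hzero : ∀ p : Fin (k + 1), p ≠ Fin.last k → (Lm A * CW A C) p (Fin.last k) = 0 := by
    intro p hp
    have hpk : p.1 ≠ k := fun hh => hp (Fin.ext (by simpa using hh))
    rw [Matrix.mul_apply]
    have hv : ∀ s, CW A C s (Fin.last k) = A s (Fin.last k) := by
      intro s; simp [CW]
    calc ∑ s, Lm A p s * CW A C s (Fin.last k) = ∑ s, Lm A p s * A s (Fin.last k) :=
          Finset.sum_congr rfl fun s _ => by rw [hv]
      _ = (Fmat A p fun s => A s (Fin.last k)).det := sum_L A p hpk _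
      _ = 0 := det_Fmat_eq_zero A p (Fin.last k) (by simp only [Fin.val_last]; have := p.2; omega)
  have hentry : (Lm A * CW A C) (Fin.last k) (Fin.last k) = A (Fin.last k) (Fin.last k) := by
    rw [Matrix.mul_apply]
    have hsum : ∀ s : Fin (k + 1), Lm A (Fin.last k) s * CW A C s (Fin.last k)
        = if s = Fin.last k then CW A C s (Fin.last k) else 0 := by
      intro s
      simp only [Lm, Matrix.of_apply, Fin.val_last, reduceIte]
      by_cases hsk : s = Fin.last k
      · rw [if_pos (by simp [hsk]), if_pos hsk, one_mul]
      · rw [if_neg (by simpa [Fin.ext_iff] using hsk), if_neg hsk, zero_mul]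
    simp only [hsum]
    rw [Finset.sum_ite_eq' Finset.univ (Fin.last k) (fun s => CW A C s (Fin.last k))]
    simp [CW]
  have hsub : ((Lm A * CW A C).submatrix (Fin.last k).succAbove (Fin.last k).succAbove)
      = Bt A C := by
    rw [Fin.succAbove_last]
    ext i j
    rw [Matrix.submatrix_apply, Matrix.mul_apply]
    have hik : (Fin.castSucc i).1 ≠ k := by simp only [Fin.coe_castSucc]; omega
    have hv : ∀ s, CW A C s (Fin.castSucc j) = C s j := by
      intro s
      simp only [CW, Matrix.of_apply, Fin.coe_castSucc, j.2, dif_pos, Fin.eta]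
    calc ∑ s, Lm A (Fin.castSucc i) s * CW A C s (Fin.castSucc j)
        = ∑ s, Lm A (Fin.castSucc i) s * C s j :=
          Finset.sum_congr rfl fun s _ => by rw [hv]
      _ = (Fmat A (Fin.castSucc i) fun s => C s j).det := sum_L A (Fin.castSucc i) hik _
      _ = Bt A C i j := rfl
  rw [Matrix.det_succ_column (Lm A * CW A C) (Fin.last k),
    Finset.sum_eq_single (Fin.last k) (fun p _ hp => by rw [hzero p hp]; ring)
      (fun h => absurd (Finset.mem_univ _) h)]
  rw [hentry, hsub, Fin.val_last]
  have hpow : ((-1 : S)) ^ (k + k) = 1 := by rw [← two_mul, pow_mul]; norm_num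
  rw [hpow, one_mul]

lemma prodD (hk : 1 ≤ k) (A : Matrix (Fin (k + 1)) (Fin (k + 1)) S) :
    ∏ i, (Dm A i).det = A.det * (A (Fin.last k) (Fin.last k) * Pr A) := by
  obtain ⟨m, rfl⟩ : ∃ m, k = m + 1 := ⟨k - 1, by omega⟩
  have h0 : (Dm A 0).det = A.det := by
    congr 1
    ext l q
    simp only [Dm, Matrix.of_apply]
    congr 1 <;> exact Fin.ext (by simp)
  rw [Fin.prod_univ_succ, h0]
  congr 1
  rw [Fin.prod_univ_castSucc, Fin.succ_last, D_last, mul_comm]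
  congr 1
  rw [Pr, Fin.prod_univ_succ]
  simp only [Fin.val_zero, reduceIte, one_mul, Fin.val_succ, Nat.succ_ne_zero, if_false]
  apply Finset.prod_congr rfl
  intro i _
  exact congrArg (fun p => (Dm A p).det) (Fin.ext (by simp))

lemma core (hk : 1 ≤ k) (A : Matrix (Fin (k + 1)) (Fin (k + 1)) S)
    (C : Matrix (Fin (k + 1)) (Fin k) S) :
    (Bt A C).det * (A (Fin.last k) (Fin.last k) * A.det)
      = ((CW A C).det * Pr A) * (A (Fin.last k) (Fin.last k) * A.det) := by
  calc (Bt A C).det * (A (Fin.last k) (Fin.last k) * A.det)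
      = (A (Fin.last k) (Fin.last k) * (Bt A C).det) * A.det := by ring
    _ = (Lm A * CW A C).det * A.det := by rw [LCW hk]
    _ = (CW A C).det * ((Lm A).det * A.det) := by rw [det_mul]; ring
    _ = (CW A C).det * (A.det * (A (Fin.last k) (Fin.last k) * Pr A)) := by
        rw [detL_mul_detA, prodD hk]
    _ = ((CW A C).det * Pr A) * (A (Fin.last k) (Fin.last k) * A.det) := by ring

lemma main {R : Type*} [CommRing R] (hk : 1 ≤ k) (A : Matrix (Fin (k + 1)) (Fin (k + 1)) R)
    (C : Matrix (Fin (k + 1)) (Fin k) R) :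
    (Bt A C).det = (CW A C).det * Pr A := by
  let A₀ : Matrix (Fin (k + 1)) (Fin (k + 1))
      (MvPolynomial ((Fin (k + 1) × Fin (k + 1)) ⊕ (Fin (k + 1) × Fin k)) ℤ) :=
    Matrix.of fun i j => MvPolynomial.X (Sum.inl (i, j))
  let C₀ : Matrix (Fin (k + 1)) (Fin k)
      (MvPolynomial ((Fin (k + 1) × Fin (k + 1)) ⊕ (Fin (k + 1) × Fin k)) ℤ) :=
    Matrix.of fun i j => MvPolynomial.X (Sum.inr (i, j))
  have hu : A₀ (Fin.last k) (Fin.last k) * A₀.det ≠ 0 := by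
    intro h
    have h2 := congrArg (MvPolynomial.eval
      (Sum.elim (fun p : Fin (k + 1) × Fin (k + 1) => if p.1 = p.2 then (1 : ℤ) else 0)
        (fun _ => (0 : ℤ)))) h
    rw [_root_.map_mul, map_zero, RingHom.map_det] at h2
    have hA1 : A₀.map (MvPolynomial.eval
        (Sum.elim (fun p : Fin (k + 1) × Fin (k + 1) => if p.1 = p.2 then (1 : ℤ) else 0)
          (fun _ => (0 : ℤ)))) = (1 : Matrix (Fin (k + 1)) (Fin (k + 1)) ℤ) := by
      ext i j
      simp [A₀, Matrix.one_apply]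
    rw [RingHom.mapMatrix_apply, hA1, Matrix.det_one] at h2
    simp [A₀] at h2
  have hgen : (Bt A₀ C₀).det = (CW A₀ C₀).det * Pr A₀ :=
    mul_right_cancel₀ hu (core hk A₀ C₀)
  let φ := MvPolynomial.eval₂Hom (Int.castRingHom R)
      (Sum.elim (fun p : Fin (k + 1) × Fin (k + 1) => A p.1 p.2)
        (fun p : Fin (k + 1) × Fin k => C p.1 p.2))
  have hφA : ∀ i j, φ (A₀ i j) = A i j := by intro i j; simp [φ, A₀]
  have hφC : ∀ i j, φ (C₀ i j) = C i j := by intro i j; simp [φ, C₀]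
  have hBt : (Bt A₀ C₀).map φ = Bt A C := by
    ext i j
    simp only [Matrix.map_apply, Bt, Matrix.of_apply]
    rw [RingHom.map_det]
    congr 1
    ext l q
    simp only [RingHom.mapMatrix_apply, Matrix.map_apply, Fmat, Matrix.of_apply, apply_ite φ,
      hφA, hφC]
  have hCW : (CW A₀ C₀).map φ = CW A C := by
    ext p l
    simp only [Matrix.map_apply, CW, Matrix.of_apply, apply_dite φ, hφA, hφC]
  have hD : ∀ i : Fin k, φ (Dm A₀ (Fin.castSucc i)).det = (Dm A (Fin.castSucc i)).det := by
    intro i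
    rw [RingHom.map_det]
    congr 1
    ext l q
    simp only [RingHom.mapMatrix_apply, Matrix.map_apply, Dm, Matrix.of_apply, hφA]
  have hPr : φ (Pr A₀) = Pr A := by
    rw [Pr, Pr, map_prod]
    exact Finset.prod_congr rfl fun i _ => by
      rw [apply_ite φ, _root_.map_one, hD]
  have hfin := congrArg φ hgen
  rw [_root_.map_mul, hPr, RingHom.map_det, RingHom.map_det, RingHom.mapMatrix_apply,
    RingHom.mapMatrix_apply, hBt, hCW] at hfin
  exact hfin

end Stmt7


/-- Determinant identity for a matrix of minors (lemma 5 of the paper). With rows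
`r₁,…,r_{k+1}` and columns `c₁,…,c_k` (0-indexed here: `r : Fin (k+1) → Fin n`,
`c : Fin k → Fin n`), the determinant of the `k × k` matrix
`B i j = M(rᵢ…r_{k+1} | c_j r_{i+1}…r_{k+1})` equals
`M(r₁…r_k r_{k+1} | c₁…c_k r_{k+1}) · ∏_{i=2}^{k} M(rᵢ…r_{k+1} | rᵢ…r_{k+1})`. -/
theorem stmt_7 {R : Type*} [CommRing R] {n k : ℕ} (hk : 1 ≤ k)
    (M : Matrix (Fin n) (Fin n) R)
    (r : Fin (k + 1) → Fin n) (c : Fin k → Fin n) :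
    (Matrix.of fun i j : Fin k =>
        (M.submatrix
          (fun l : Fin (k + 1 - i.1) => r ⟨i.1 + l.1, by have := i.2; have := l.2; omega⟩)
          (fun l : Fin (k + 1 - i.1) =>
            if l.1 = 0 then c j
            else r ⟨i.1 + l.1, by have := i.2; have := l.2; omega⟩)).det).det =
      (M.submatrix r
          (fun l : Fin (k + 1) => if h : l.1 < k then c ⟨l.1, h⟩ else r (Fin.last k))).det *
        ∏ i : Fin k,
          (if i.1 = 0 then 1 else
            (M.submatrix
              (fun l : Fin (k + 1 - i.1) => r ⟨i.1 + l.1, by have := i.2; have := l.2; omega⟩)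
              (fun l : Fin (k + 1 - i.1) =>
                r ⟨i.1 + l.1, by have := i.2; have := l.2; omega⟩)).det) := by
  refine Eq.trans (congrArg Matrix.det
      (?_ : _ = Stmt7.Bt (M.submatrix r r) (M.submatrix r c)))
    ((Stmt7.main hk (M.submatrix r r) (M.submatrix r c)).trans ?_)
  · ext i j
    show (M.submatrix _ _).det
        = (Stmt7.Fmat (M.submatrix r r) (Fin.castSucc i) fun s => (M.submatrix r c) s j).det
    rw [Stmt7.det_cast (show k + 1 - i.1 = k - (Fin.castSucc i).1 + 1 from by
      have := i.2; simp only [Fin.coe_castSucc]; omega)]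
    congr 1
    ext l m
    simp only [Matrix.submatrix_apply, Stmt7.Fmat, Matrix.of_apply, Fin.coe_cast,
      Fin.coe_castSucc]
    split_ifs <;> rfl
  · refine congrArg₂ (· * ·) ?_ ?_
    · refine congrArg Matrix.det ?_
      ext s l
      simp only [Stmt7.CW, Matrix.submatrix_apply, Matrix.of_apply]
      split_ifs <;> rfl
    · rw [Stmt7.Pr]
      refine Finset.prod_congr rfl fun i _ => ?_
      by_cases hi : i.1 = 0
      · rw [if_pos hi, if_pos hi]
      · rw [if_neg hi, if_neg hi,
          Stmt7.det_cast (show k - (Fin.castSucc i).1 + 1 = k + 1 - i.1 from by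
            have := i.2; simp only [Fin.coe_castSucc]; omega)]
        congr 1
        try ext l m
        try rfl
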